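/- arXiv:1309.0406 — 12 statements merged into one kernel-verified Lean document; each statement's English description precedes it below -/
import Mathlib

section
/- For every n ≥ 1, there is a unique (up to isomorphism) B-semimodule E with rank n and free rank 1, namely E = X^∨ where X = {1,…,n} is totally ordered, X^∨ = X ∪ {0} with addition given by join and 0 as the neutral element. -/
/-!
In a selective monoid (`x + y ∈ {x, y}`) the submonoid generated by a set `s` is just
`s ∪ {0}`, and `x ≤ y ↔ x + y = y` is a linear order in which `+` is `max` and `0` is the
least element. A minimal generating set avoids `0`, so a semimodule of rank `n` has exactly
`n + 1` elements, and the unique order isomorphism with `Fin (n + 1)` is the required one.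
-/

namespace AddSubmonoid

theorem coe_closure_eq_insert_zero_of_selective {M : Type*} [AddMonoid M]
    (hsel : ∀ x y : M, x + y = x ∨ x + y = y) (s : Set M) :
    (closure s : Set M) = insert 0 s := by
  refine Set.Subset.antisymm (fun x hx => ?_) (Set.insert_subset (zero_mem _) subset_closure)
  induction hx using closure_induction with
  | mem y hy => exact Set.mem_insert_of_mem _ hy
  | zero => exact Set.mem_insert _ _
  | add a b _ _ ha hb => rcases hsel a b with h | h <;> rw [h] <;> assumption

theorem zero_notMem_of_closure_eq_top_of_card_le {M : Type*} [AddMonoid M] [DecidableEq M]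
    {S : Finset M} (hS : closure (S : Set M) = ⊤)
    (hmin : ∀ T : Finset M, closure (T : Set M) = ⊤ → S.card ≤ T.card) : (0 : M) ∉ S := by
  intro h0
  have hT : closure ((S.erase 0 : Finset M) : Set M) = ⊤ := by
    rw [← closure_insert_zero, ← Finset.coe_insert, Finset.insert_erase h0, hS]
  exact (Finset.card_erase_lt_of_mem h0).not_ge (hmin _ hT)

end AddSubmonoid

section Selective

variable {E : Type*} [AddCommMonoid E]

noncomputable abbrev LinearOrder.ofSelectiveAdd (hsel : ∀ x y : E, x + y = x ∨ x + y = y) :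
    LinearOrder E where
  le x y := x + y = y
  le_refl x := (hsel x x).elim id id
  le_trans a b c (hab : a + b = b) (hbc : b + c = c) := show a + c = c by
    rw [← hbc, ← add_assoc, hab]
  le_antisymm a b (hab : a + b = b) (hba : b + a = a) := by rw [← hab, add_comm, hba]
  le_total a b := (hsel a b).symm.imp id fun h => show b + a = a by rw [add_comm, h]
  toDecidableLE := Classical.decRel _

theorem exists_equiv_fin_max_of_selective (hsel : ∀ x y : E, x + y = x ∨ x + y = y)
    {n : ℕ} (hcard : Nat.card E = n + 1) :
    ∃ e : E ≃ Fin (n + 1), e 0 = 0 ∧ ∀ x y : E, e (x + y) = max (e x) (e y) := by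
  let _ := LinearOrder.ofSelectiveAdd hsel
  have : Fintype E := @Fintype.ofFinite E (Nat.finite_of_card_ne_zero (by omega))
  have hzero_le (x : E) : 0 ≤ x := zero_add x
  have hadd_eq_max (x y : E) : x + y = max x y := by
    rcases le_total x y with h | h
    · rw [max_eq_right h]; exact h
    · rw [max_eq_left h, add_comm]; exact h
  let f : Fin (n + 1) ≃o E := monoEquivOfFin E (Fintype.card_eq_nat_card.trans hcard)
  refine ⟨f.symm.toEquiv, Fin.le_zero_iff.mp (f.symm_apply_le.mpr (hzero_le _)), fun x y => ?_⟩
  rw [hadd_eq_max]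
  exact f.symm.monotone.map_max

end Selective

theorem stmt4_general (n : ℕ) (E : Type*) [AddCommMonoid E]
    (hsel : ∀ x y : E, x + y = x ∨ x + y = y)
    (hrank : IsLeast {k : ℕ | ∃ S : Finset E, S.card = k ∧
      AddSubmonoid.closure (S : Set E) = ⊤} n) :
    ∃ e : E ≃ Fin (n + 1), e 0 = 0 ∧ ∀ x y : E, e (x + y) = max (e x) (e y) := by
  classical
  obtain ⟨⟨S, hScard, hSgen⟩, hleast⟩ := hrank
  have h0 : (0 : E) ∉ S := AddSubmonoid.zero_notMem_of_closure_eq_top_of_card_le hSgen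
    fun T hT => hScard ▸ hleast ⟨T, rfl, hT⟩
  have huniv : (Set.univ : Set E) = ↑(insert 0 S) := by
    rw [Finset.coe_insert, ← AddSubmonoid.coe_closure_eq_insert_zero_of_selective hsel, hSgen,
      AddSubmonoid.coe_top]
  have hcard : Nat.card E = n + 1 := by
    rw [← Nat.card_univ, huniv, Nat.card_coe_set_eq, Set.ncard_coe_finset, Finset.card_insert_of_notMem h0, hScard]
  exact exists_equiv_fin_max_of_selective hsel hcard

/-- For `n ≥ 1`, a `B`-semimodule of rank `n` (least cardinality of a generating set)
and free rank 1 (selective) is unique up to isomorphism: it is isomorphic to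
`X^∨ = {0} ∪ {1,…,n}`, realized as `Fin (n+1)` with `max` as addition and `0` as zero. -/
theorem stmt4 (n : ℕ) (hn : 1 ≤ n) (E : Type*) [AddCommMonoid E]
    (hidem : ∀ x : E, x + x = x)
    (hsel : ∀ x y : E, x + y = x ∨ x + y = y)
    (hrank : IsLeast {k : ℕ | ∃ S : Finset E, S.card = k ∧
      AddSubmonoid.closure (S : Set E) = ⊤} n) :
    ∃ e : E ≃ Fin (n + 1), e 0 = 0 ∧ ∀ x y : E, e (x + y) = max (e x) (e y) :=
  stmt4_general n E hsel hrank
end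

section
/- A B-semimodule B^{(n,1)} has cardinality n+1, and this is minimal among B-semimodules of rank n: any B-semimodule of rank n has cardinality at least n+1, and if it has cardinality exactly n+1 then it is isomorphic to B^{(n,1)}. -/
/-!
An idempotent commutative monoid is a join-semilattice with bottom `0`, where `a ≤ b` means
`a + b = b`. Its nonzero elements generate it, so the rank is at most `|E| - 1`. By
well-founded induction, its nonzero join-irreducible elements also generate it, so there are at
least `n` of them. When `|E| = n + 1` every nonzero element is therefore join-irreducible; then
`x + y ∈ {x, y}` for all `x, y`, so `E` is a chain and `+` is `max` along the unique order
isomorphism `E ≃o Fin (n + 1)`.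
-/

theorem AddSubmonoid.closure_univ_erase_zero {M : Type*} [AddMonoid M] [Fintype M]
    [DecidableEq M] :
    AddSubmonoid.closure ((Finset.univ.erase (0 : M) : Finset M) : Set M) = ⊤ := by
  refine (AddSubmonoid.eq_top_iff' _).2 fun x => ?_
  obtain rfl | hx := eq_or_ne x 0
  · exact zero_mem _
  · exact AddSubmonoid.subset_closure (by simp [hx])

section IdempotentMonoid

variable {E : Type*} [AddCommMonoid E]

abbrev idemSemilatticeSup (hidem : ∀ x : E, x + x = x) : SemilatticeSup E :=
  @SemilatticeSup.mk' E ⟨(· + ·)⟩ add_comm add_assoc hidem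

def IsJoinIrreducible (x : E) : Prop :=
  x ≠ 0 ∧ ∀ a b : E, a + b = x → a = x ∨ b = x

theorem closure_setOf_isJoinIrreducible [Finite E] (hidem : ∀ x : E, x + x = x) :
    AddSubmonoid.closure {x : E | IsJoinIrreducible x} = ⊤ := by
  let := idemSemilatticeSup hidem
  refine (AddSubmonoid.eq_top_iff' _).2 fun x => ?_
  induction x using WellFoundedLT.induction with
  | ind x ih =>
    by_cases hirr : IsJoinIrreducible x
    · exact AddSubmonoid.subset_closure hirr
    obtain rfl | ⟨a, b, rfl, ha, hb⟩ : x = 0 ∨ ∃ a b, a + b = x ∧ a ≠ x ∧ b ≠ x := by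
      simp only [IsJoinIrreducible, not_and_or, not_forall, not_or, ne_eq, not_not] at hirr
      tauto
    · exact zero_mem _
    · exact add_mem (ih a ((le_sup_left : a ≤ a ⊔ b).lt_of_ne ha))
        (ih b ((le_sup_right : b ≤ a ⊔ b).lt_of_ne hb))

theorem isJoinIrreducible_of_card_le_generators [Fintype E] (hidem : ∀ x : E, x + x = x)
    (hgen : ∀ S : Finset E, AddSubmonoid.closure (S : Set E) = ⊤ → Fintype.card E ≤ S.card + 1)
    {x : E} (hx : x ≠ 0) : IsJoinIrreducible x := by
  classical
  set J := Finset.univ.filter (IsJoinIrreducible (E := E))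
  have hJ : AddSubmonoid.closure (J : Set E) = ⊤ := by
    simpa [J] using closure_setOf_isJoinIrreducible hidem
  have hJsub : J ⊆ Finset.univ.erase 0 := fun y hy => by
    simpa [J] using (Finset.mem_filter.1 hy).2.1
  have hcard : (Finset.univ.erase (0 : E)).card ≤ J.card := by
    have := hgen J hJ
    rw [Finset.card_erase_of_mem (Finset.mem_univ _), Finset.card_univ]
    omega
  have hxJ : x ∈ J := by
    rw [Finset.eq_of_subset_of_card_le hJsub hcard]
    simpa using hx
  exact (Finset.mem_filter.1 hxJ).2

theorem add_eq_left_or_add_eq_right (hidem : ∀ x : E, x + x = x)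
    (hirr : ∀ x : E, x ≠ 0 → IsJoinIrreducible x) (x y : E) : x + y = x ∨ x + y = y := by
  by_cases hxy : x + y = 0
  · have hx : x = 0 := by rw [← add_zero x, ← hxy, ← add_assoc, hidem, hxy]
    simp [hx]
  · exact ((hirr _ hxy).2 x y rfl).imp Eq.symm Eq.symm

-- The order is `x ≤ y ↔ x + y = y`, and `max` is `+` on the nose.
noncomputable abbrev selectiveLinearOrder (hsel : ∀ x y : E, x + y = x ∨ x + y = y) :
    LinearOrder E :=
  letI := idemSemilatticeSup fun x => (hsel x x).elim id id
  { le_total := fun x y => (hsel x y).elim (fun h => .inr ((add_comm y x).trans h)) .inl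
    toDecidableLE := Classical.decRel _
    max := (· + ·)
    max_def := fun x y => by
      split_ifs with h
      · exact h
      · exact (hsel x y).resolve_right h }

theorem exists_equiv_fin_add_eq_max [Fintype E] (hsel : ∀ x y : E, x + y = x ∨ x + y = y)
    {n : ℕ} (hcard : Fintype.card E = n + 1) :
    ∃ e : E ≃ Fin (n + 1), e 0 = 0 ∧ ∀ x y : E, e (x + y) = max (e x) (e y) := by
  let := selectiveLinearOrder hsel
  let e := (Fintype.orderIsoFinOfCardEq E hcard).symm
  refine ⟨e.toEquiv, le_antisymm ?_ (Fin.zero_le _), e.map_sup⟩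
  simpa using e.monotone (zero_add (e.symm 0) : (0 : E) ≤ e.symm 0)

end IdempotentMonoid

/-- `B^{(n,1)}` (realized as `Fin (n+1)` with `max`) has cardinality `n+1`, and this is
minimal among `B`-semimodules of rank `n`: any `B`-semimodule of rank `n` has at least
`n+1` elements, and if it has exactly `n+1` elements it is isomorphic to `B^{(n,1)}`. -/
theorem stmt6 (n : ℕ) (E : Type*) [AddCommMonoid E] [Fintype E]
    (hidem : ∀ x : E, x + x = x)
    (hrank : IsLeast {k : ℕ | ∃ S : Finset E, S.card = k ∧
      AddSubmonoid.closure (S : Set E) = ⊤} n) :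
    Fintype.card (Fin (n + 1)) = n + 1 ∧
    n + 1 ≤ Fintype.card E ∧
    (Fintype.card E = n + 1 →
      ∃ e : E ≃ Fin (n + 1), e 0 = 0 ∧ ∀ x y : E, e (x + y) = max (e x) (e y)) := by
  classical
  have hlow : n + 1 ≤ Fintype.card E := by
    have := hrank.2 ⟨_, rfl, AddSubmonoid.closure_univ_erase_zero⟩
    rw [Finset.card_erase_of_mem (Finset.mem_univ _), Finset.card_univ] at this
    have := Fintype.card_pos (α := E)
    omega
  refine ⟨Fintype.card_fin _, hlow, fun hcard => ?_⟩
  have hgen : ∀ S : Finset E, AddSubmonoid.closure (S : Set E) = ⊤ →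
      Fintype.card E ≤ S.card + 1 := fun S hS => hcard ▸ Nat.succ_le_succ (hrank.2 ⟨S, rfl, hS⟩)
  exact exists_equiv_fin_add_eq_max
    (add_eq_left_or_add_eq_right hidem fun _ => isJoinIrreducible_of_card_le_generators hidem hgen)
    hcard
end

section
/- The category whose objects are the semimodules B^{(n,1)} (n ≥ 1) over the Boolean semifield B, with morphisms the B-linear maps f satisfying f⁻¹({0}) = {0}, is isomorphic to the simplicial category Δ of nonempty finite ordinals with order-preserving maps. Concretely: B-linear maps f : X^∨ → Y^∨ with f⁻¹({0}) = {0} correspond bijectively to order-preserving maps X → Y, for X, Y finite totally ordered sets. -/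
/-- `B`-linear maps `f : X^∨ → Y^∨` (i.e. maps of `WithBot X → WithBot Y` preserving
`⊥` and joins) with `f⁻¹({0}) = {0}` correspond bijectively, by restriction, to
order-preserving maps `X → Y`, for `X, Y` finite nonempty totally ordered sets: this
identifies the category of the `B^{(n,1)}` with the simplicial category `Δ`. -/
theorem stmt7 (X Y : Type*) [LinearOrder X] [LinearOrder Y] [Fintype X] [Fintype Y]
    [Nonempty X] [Nonempty Y] :
    ∃ e : {f : WithBot X → WithBot Y //
        f ⊥ = ⊥ ∧ (∀ a b, f (a ⊔ b) = f a ⊔ f b) ∧ ∀ a, f a = ⊥ → a = ⊥} ≃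
        {g : X → Y // Monotone g},
      ∀ (f : {f : WithBot X → WithBot Y //
          f ⊥ = ⊥ ∧ (∀ a b, f (a ⊔ b) = f a ⊔ f b) ∧ ∀ a, f a = ⊥ → a = ⊥})
        (x : X), (f : WithBot X → WithBot Y) (x : WithBot X) = ((e f : X → Y) x : WithBot Y) := by
  refine ⟨⟨fun f => ⟨fun x => (f.1 x).unbot (fun h => by
      exact absurd (f.2.2.2 _ h) (by simp)), ?_⟩,
    fun g => ⟨WithBot.map g.1, ?_, ?_, ?_⟩, ?_, ?_⟩, ?_⟩
  · -- monotonicity of restriction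
    intro a b hab
    have hmono : Monotone f.1 := fun u v huv => by
      have h2 := f.2.2.1 u v
      rw [sup_eq_right.2 huv] at h2
      exact le_sup_left.trans h2.ge
    have h : f.1 (a : WithBot X) ≤ f.1 (b : WithBot X) := hmono (by exact_mod_cast hab)
    rwa [← WithBot.coe_le_coe, WithBot.coe_unbot, WithBot.coe_unbot]
  · rfl
  · intro a b
    cases a with
    | bot => simp
    | coe x =>
      cases b with
      | bot => simp
      | coe y =>
        rw [← WithBot.coe_sup, WithBot.map_coe, WithBot.map_coe, WithBot.map_coe,
          ← WithBot.coe_sup, g.2.map_sup]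
  · intro a h
    cases a with
    | bot => rfl
    | coe x => simp [WithBot.map_coe] at h
  · -- left inverse
    intro f
    ext a
    cases a with
    | bot => simp [f.2.1]
    | coe x => simp [WithBot.map_coe, WithBot.coe_unbot]
  · -- right inverse
    intro g
    ext x
    simp [WithBot.map_coe]
  · intro f x
    simp [WithBot.coe_unbot]
end

section
/- Let (X,θ) be an archimedean set. Then X ∪ {0} with sum x ∨ y = sup(x,y) (and 0 as neutral element) and with Z_max-action u^n · x = θ^n(x), 0 · x = 0, is a semimodule over the tropical semifield F = Z_max. -/
private lemma aux_sm {X : Type*} [LinearOrder X] (θ : Equiv.Perm X)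
    (hmono : StrictMono θ) : ∀ n : ℤ, StrictMono ⇑(θ ^ n) := by
  have hinv : StrictMono ⇑θ⁻¹ := by
    intro a b hab
    have := hmono.lt_iff_lt (a := θ⁻¹ a) (b := θ⁻¹ b)
    simpa using this.mp (by simpa using hab)
  have hnat : ∀ (σ : Equiv.Perm X), StrictMono ⇑σ → ∀ k : ℕ, StrictMono ⇑(σ ^ k) := by
    intro σ hσ k
    induction k with
    | zero => simpa using strictMono_id
    | succ k ih =>
      rw [pow_succ σ k]
      intro a b hab
      exact ih (hσ hab)
  intro n
  rcases n with k | k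
  · simpa using hnat θ hmono k
  · rw [zpow_negSucc, ← inv_pow]
    exact hnat θ⁻¹ hinv (k + 1)

private lemma aux_le {X : Type*} [LinearOrder X] (θ : Equiv.Perm X)
    (hθ : ∀ x : X, x < θ x) :
    ∀ (n m : ℤ), n ≤ m → ∀ a : X, (θ ^ n) a ≤ (θ ^ m) a := by
  have hk : ∀ (k : ℕ) (b : X), b ≤ (θ ^ (k : ℤ)) b := by
    intro k
    induction k with
    | zero => intro b; simp
    | succ k ih =>
      intro b
      have h1 : θ ^ ((k : ℤ) + 1) = θ * θ ^ (k : ℤ) := by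
        rw [add_comm, zpow_add, zpow_one]
      calc b ≤ (θ ^ (k : ℤ)) b := ih b
        _ ≤ θ ((θ ^ (k : ℤ)) b) := (hθ _).le
        _ = (θ ^ ((k : ℤ) + 1)) b := by rw [h1]; rfl
  intro n m hnm a
  have h1 : θ ^ m = θ ^ (m - n) * θ ^ n := by rw [← zpow_add, sub_add_cancel]
  have h2 : ((m - n).toNat : ℤ) = m - n := Int.toNat_of_nonneg (by omega)
  calc (θ ^ n) a ≤ (θ ^ (((m - n).toNat : ℕ) : ℤ)) ((θ ^ n) a) := hk _ _
    _ = (θ ^ (m - n)) ((θ ^ n) a) := by rw [h2]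
    _ = (θ ^ m) a := by rw [h1]; rfl

/-- Let `(X, θ)` be an archimedean set (`X` totally ordered, `θ` an order automorphism
with `θ x > x`, satisfying the archimedean property). Then `X ∪ {0} = WithBot X` with
`⊔` as addition and the `Z_max`-action `u^n · x = θ^n x`, `0 · x = 0`, is a semimodule
over the tropical semifield `F = Z_max` (encoded as `WithBot ℤ`, where the semifield
multiplication is `+`, its unit is `(0:ℤ)` and its zero is `⊥`). -/
theorem stmt9 (X : Type*) [LinearOrder X] [Nonempty X] (θ : Equiv.Perm X)
    (hmono : StrictMono θ) (hθ : ∀ x : X, x < θ x)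
    (harch : ∀ x y : X, ∃ n : ℕ, y ≤ (θ ^ n) x) :
    let act : WithBot ℤ → WithBot X → WithBot X := fun l x =>
      WithBot.recBotCoe ⊥ (fun n : ℤ => WithBot.map (⇑(θ ^ n)) x) l
    (∀ (l : WithBot ℤ) (x y : WithBot X), act l (x ⊔ y) = act l x ⊔ act l y) ∧
    (∀ (l m : WithBot ℤ) (x : WithBot X), act (l ⊔ m) x = act l x ⊔ act m x) ∧
    (∀ (l m : WithBot ℤ) (x : WithBot X), act (l + m) x = act l (act m x)) ∧
    (∀ x : WithBot X, act ⊥ x = ⊥) ∧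
    (∀ x : WithBot X, act ((0 : ℤ) : WithBot ℤ) x = x) := by
  intro act
  have hbot : ∀ x : WithBot X, act ⊥ x = ⊥ := fun _ => rfl
  have hcoe : ∀ (n : ℤ) (x : WithBot X), act (n : WithBot ℤ) x = WithBot.map (⇑(θ ^ n)) x :=
    fun _ _ => rfl
  refine ⟨?_, ?_, ?_, hbot, ?_⟩
  · intro l x y
    induction l using WithBot.recBotCoe with
    | bot => simp [hbot]
    | coe n =>
      rw [hcoe, hcoe, hcoe]
      induction x using WithBot.recBotCoe with
      | bot => simp
      | coe a =>
        induction y using WithBot.recBotCoe with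
        | bot => simp
        | coe b =>
          rw [← WithBot.coe_sup, WithBot.map_coe, WithBot.map_coe, WithBot.map_coe,
            ← WithBot.coe_sup, (aux_sm θ hmono n).monotone.map_sup]
  · intro l m x
    induction l using WithBot.recBotCoe with
    | bot => simp [hbot]
    | coe n =>
      induction m using WithBot.recBotCoe with
      | bot => simp [hbot]
      | coe m =>
        rw [← WithBot.coe_sup, hcoe, hcoe, hcoe]
        induction x using WithBot.recBotCoe with
        | bot => simp
        | coe a =>
          rw [WithBot.map_coe, WithBot.map_coe, WithBot.map_coe, ← WithBot.coe_sup]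
          rcases le_total n m with h | h
          · rw [sup_eq_right.mpr h, sup_eq_right.mpr (aux_le θ hθ n m h a)]
          · rw [sup_eq_left.mpr h, sup_eq_left.mpr (aux_le θ hθ m n h a)]
  · intro l m x
    induction l using WithBot.recBotCoe with
    | bot => simp [hbot]
    | coe n =>
      induction m using WithBot.recBotCoe with
      | bot =>
        have : act ⊥ x = ⊥ := hbot x
        rw [this]
        simp [hcoe, hbot]
      | coe m =>
        rw [← WithBot.coe_add, hcoe, hcoe, hcoe]
        induction x using WithBot.recBotCoe with
        | bot => simp
        | coe a =>
          rw [WithBot.map_coe, WithBot.map_coe, WithBot.map_coe]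
          congr 1
          rw [zpow_add]
          rfl
  · intro x
    rw [hcoe]
    induction x using WithBot.recBotCoe with
    | bot => simp
    | coe a => rw [WithBot.map_coe]; simp
end

section
/- Let (X,θ) and (X',θ') be archimedean sets and h : (X,θ)^∨ → (X',θ')^∨ a nonzero Z_max-linear map of the associated semimodules. Then h⁻¹({0}) = {0}. -/
/-- Let `(X, θ)` and `(X', θ')` be archimedean sets and `h : (X,θ)^∨ → (X',θ')^∨` a
nonzero `Z_max`-linear map of the associated semimodules (preserving `⊥`, joins, and
equivariant for the actions `u^n · x = θ^n x`). Then `h⁻¹({0}) = {0}`. -/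
theorem stmt10 (X X' : Type*) [LinearOrder X] [LinearOrder X'] [Nonempty X] [Nonempty X']
    (θ : Equiv.Perm X) (θ' : Equiv.Perm X')
    (hmono : StrictMono θ) (hθ : ∀ x : X, x < θ x)
    (harch : ∀ x y : X, ∃ n : ℕ, y ≤ (θ ^ n) x)
    (hmono' : StrictMono θ') (hθ' : ∀ x : X', x < θ' x)
    (harch' : ∀ x y : X', ∃ n : ℕ, y ≤ (θ' ^ n) x)
    (h : WithBot X → WithBot X')
    (hbot : h ⊥ = ⊥)
    (hadd : ∀ x y : WithBot X, h (x ⊔ y) = h x ⊔ h y)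
    (hequi : ∀ (n : ℤ) (x : WithBot X),
      h (WithBot.map (⇑(θ ^ n)) x) = WithBot.map (⇑(θ' ^ n)) (h x))
    (hnz : ∃ x : WithBot X, h x ≠ ⊥) :
    ∀ x : WithBot X, h x = ⊥ → x = ⊥ := by
  intro x hx
  by_contra hxne
  obtain ⟨a, rfl⟩ := WithBot.ne_bot_iff_exists.mp hxne
  obtain ⟨y, hy⟩ := hnz
  have hyne : y ≠ ⊥ := fun hb => hy (hb ▸ hbot)
  obtain ⟨b, rfl⟩ := WithBot.ne_bot_iff_exists.mp hyne
  obtain ⟨n, hn⟩ := harch a b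
  have key : ((b : WithBot X) ⊔ WithBot.map (⇑(θ ^ (n:ℤ))) (a : WithBot X))
      = WithBot.map (⇑(θ ^ (n:ℤ))) (a : WithBot X) := by
    rw [WithBot.map_coe, sup_eq_right, WithBot.coe_le_coe, zpow_natCast]
    exact hn
  have h1 : h (WithBot.map (⇑(θ ^ (n:ℤ))) (a : WithBot X)) = ⊥ := by
    rw [hequi, hx, WithBot.map_bot]
  have := hadd (b : WithBot X) (WithBot.map (⇑(θ ^ (n:ℤ))) (a : WithBot X))
  rw [key, h1] at this
  exact hy (sup_eq_bot_iff.mp this.symm).1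
end

section
/- Let E = F^{(n)} be the Z_max-semimodule associated to the archimedean set (Z, θ), θ(x) = x + n. For every subset Y ⊆ {0,…,n-1} of cardinality k ≥ 1, the map f : Z → Z defined by f(x) = y_{x mod k} + n·⌊x/k⌋, where Y = {y_0 < y_1 < ⋯ < y_{k-1}}, is nondecreasing, injective, and satisfies f(x+k) = f(x) + n for all x ∈ Z. -/
/-- Let `E = F^{(n)}` be the `Z_max`-semimodule of the archimedean set `(ℤ, x ↦ x+n)`.
For every subset `Y = {y_0 < y_1 < ⋯ < y_{k-1}} ⊆ {0,…,n-1}` of cardinality `k ≥ 1`,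
the map `f : ℤ → ℤ`, `f x = y_{x mod k} + n⌊x/k⌋`, is nondecreasing, injective, and
satisfies `f (x + k) = f x + n`; it is the injective morphism `F^{(k)} → F^{(n)}`
whose image on projective spaces is `Y`. -/
theorem stmt11 (n k : ℕ) (hn : 1 ≤ n) (hk : 1 ≤ k)
    (y : Fin k → ℤ) (hy : StrictMono y) (hyr : ∀ i, 0 ≤ y i ∧ y i < n)
    (f : ℤ → ℤ)
    (hf : ∀ x : ℤ, f x = y ⟨(x.emod k).toNat % k, Nat.mod_lt _ (by omega)⟩ + n * x.ediv k) :
    Monotone f ∧ Function.Injective f ∧ ∀ x : ℤ, f (x + k) = f x + n := by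
  have hk0 : (0:ℤ) < k := by exact_mod_cast hk
  have key : ∀ x : ℤ, f x < f (x + 1) := by
    intro x
    have h0 : 0 ≤ x.emod k := Int.emod_nonneg x (by positivity)
    have h1 : x.emod k < k := Int.emod_lt_of_pos x hk0
    have heq : (k:ℤ) * x.ediv k + x.emod k = x := Int.mul_ediv_add_emod x k
    have hring : (k:ℤ) * (x.ediv k + 1) = k * x.ediv k + k := by ring
    have htn : (x.emod k).toNat < k := by omega
    have htn' : (x.emod k).toNat % k = (x.emod k).toNat := Nat.mod_eq_of_lt htn
    rcases eq_or_lt_of_le (by omega : x.emod k ≤ (k:ℤ) - 1) with he | hl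
    · -- wrap around
      have hdiv : (x+1).ediv k = x.ediv k + 1 :=
        ((Int.ediv_emod_unique (a := x+1) (q := x.ediv k + 1) (r := 0) hk0).mpr ⟨by omega, le_refl 0, hk0⟩).1
      have hmod : (x+1).emod k = 0 :=
        ((Int.ediv_emod_unique (a := x+1) (q := x.ediv k + 1) (r := 0) hk0).mpr ⟨by omega, le_refl 0, hk0⟩).2
      rw [hf x, hf (x+1), hmod, hdiv]
      have hub := (hyr ⟨(x.emod k).toNat % k, Nat.mod_lt _ (by omega)⟩).2
      have hlb := (hyr ⟨((0:ℤ)).toNat % k, Nat.mod_lt _ (by omega)⟩).1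
      have hcast : (n:ℤ) * (x.ediv k + 1) = n * x.ediv k + n := by ring
      omega
    · -- no wrap
      have hdiv : (x+1).ediv k = x.ediv k :=
        ((Int.ediv_emod_unique (a := x+1) (q := x.ediv k) (r := x.emod k + 1) hk0).mpr ⟨by omega, by omega, by omega⟩).1
      have hmod : (x+1).emod k = x.emod k + 1 :=
        ((Int.ediv_emod_unique (a := x+1) (q := x.ediv k) (r := x.emod k + 1) hk0).mpr ⟨by omega, by omega, by omega⟩).2
      rw [hf x, hf (x+1), hmod, hdiv]
      have htn2 : (x.emod k + 1).toNat < k := by omega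
      have htn2' : (x.emod k + 1).toNat % k = (x.emod k + 1).toNat := Nat.mod_eq_of_lt htn2
      have hylt : y ⟨(x.emod k).toNat % k, Nat.mod_lt _ (by omega)⟩ <
          y ⟨(x.emod k + 1).toNat % k, Nat.mod_lt _ (by omega)⟩ := by
        apply hy
        show (x.emod k).toNat % k < (x.emod k + 1).toNat % k
        omega
      linarith
  have hsm : StrictMono f := strictMono_int_of_lt_succ key
  refine ⟨hsm.monotone, hsm.injective, ?_⟩
  intro x
  have hmod : (x + k).emod k = x.emod k := by
    have h : x + (k:ℤ) = x + (k:ℤ) * 1 := by ring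
    calc (x + (k:ℤ)).emod k = (x + (k:ℤ) * 1) % k := by rw [← h]; rfl
      _ = x % k := Int.add_mul_emod_self_left x k 1
      _ = x.emod k := rfl
  have hdiv : (x + k).ediv k = x.ediv k + 1 := by
    have h : x + (k:ℤ) = x + 1 * (k:ℤ) := by ring
    calc (x + (k:ℤ)).ediv k = (x + 1 * (k:ℤ)) / k := by rw [← h]; rfl
      _ = x / k + 1 := Int.add_mul_ediv_right x 1 (by omega : (k:ℤ) ≠ 0)
      _ = x.ediv k + 1 := rfl
  rw [hf x, hf (x+k), hmod, hdiv]
  ring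
end

section
/- Let a, b be positive integers and f : Z → Z a nondecreasing map with f(x + a) = f(x) + b for all x ∈ Z. Then there exists a unique map f^t : Z → Z such that f(x) ≥ y ⟺ x ≥ f^t(y) for all x, y ∈ Z; moreover f^t is nondecreasing and satisfies f^t(x + b) = f^t(x) + a for all x ∈ Z. -/
/-!
The condition `y ≤ f x ↔ f^t y ≤ x` says that `f^t` is a lower adjoint of `f`, so uniqueness and
monotonicity are general facts about Galois connections. Periodicity makes `f` unbounded in both
directions, so every set `{x | y ≤ f x}` is nonempty and bounded below and has a least element.
Finally `f^t (y + b) ≤ x ↔ y + b ≤ f x ↔ y ≤ f (x - a) ↔ f^t y + a ≤ x`.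
-/

open AddConstMap

section MapAddConst

variable {G H : Type*} [AddGroup G] [AddCommGroup H] [LinearOrder H] [IsOrderedAddMonoid H]
  [Archimedean H] {a : G} {b : H} {f : G → H}

theorem exists_le_apply_of_map_add_const (hper : ∀ x, f (x + a) = f x + b) (hb : 0 < b) (y : H) :
    ∃ x, y ≤ f x := by
  obtain ⟨n, hn⟩ := exists_lt_nsmul hb (y - f 0)
  refine ⟨n • a, ?_⟩
  have hf := AddConstMapClass.map_add_nsmul (⟨f, hper⟩ : G →+c[a, b] H) 0 n
  rw [AddConstMap.coe_mk, zero_add] at hf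
  exact hf ▸ (sub_lt_iff_lt_add'.mp hn).le

theorem exists_apply_lt_of_map_add_const (hper : ∀ x, f (x + a) = f x + b) (hb : 0 < b) (y : H) :
    ∃ x, f x < y := by
  obtain ⟨n, hn⟩ := exists_lt_nsmul hb (f 0 - y)
  refine ⟨-(n • a), ?_⟩
  have hf := AddConstMapClass.map_sub_nsmul (⟨f, hper⟩ : G →+c[a, b] H) 0 n
  rw [AddConstMap.coe_mk, zero_sub] at hf
  exact hf ▸ sub_lt_comm.mp hn

end MapAddConst

theorem Int.exists_galoisConnection {α : Type*} [Preorder α] {f : ℤ → α} (hf : Monotone f)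
    (habove : ∀ y, ∃ x, y ≤ f x) (hbelow : ∀ y, ∃ x, ¬y ≤ f x) :
    ∃ g : α → ℤ, GaloisConnection g f := by
  have hbdd (y : α) : BddBelow {x | y ≤ f x} := by
    obtain ⟨x₀, hx₀⟩ := hbelow y
    exact ⟨x₀, fun x hx => le_of_lt <| lt_of_not_ge fun hxx₀ => hx₀ (hx.trans (hf hxx₀))⟩
  have hmem (y : α) : y ≤ f (sInf {x | y ≤ f x}) := Int.csInf_mem (habove y) (hbdd y)
  exact ⟨fun y => sInf {x | y ≤ f x},
    fun y x => ⟨fun h => (hmem y).trans (hf h), fun h => csInf_le (hbdd y) h⟩⟩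

theorem GaloisConnection.map_add_const_of_map_add_const {G H : Type*} [AddCommGroup G]
    [PartialOrder G] [IsOrderedAddMonoid G] [AddGroup H] [Preorder H] [AddRightMono H]
    [AddRightReflectLE H] {g : H → G} {f : G → H} (gc : GaloisConnection g f) {a : G} {b : H}
    (hper : ∀ x, f (x + a) = f x + b) (y : H) : g (y + b) = g y + a := by
  refine eq_of_forall_ge_iff fun x => ?_
  calc g (y + b) ≤ x ↔ y + b ≤ f (x - a) + b := by rw [gc, ← hper, sub_add_cancel]
    _ ↔ g y + a ≤ x := by rw [add_le_add_iff_right, ← gc, le_sub_iff_add_le]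

theorem stmt12_general (a b : ℤ) (hb : 0 < b) (f : ℤ → ℤ)
    (hf : Monotone f) (hper : ∀ x : ℤ, f (x + a) = f x + b) :
    (∃! g : ℤ → ℤ, ∀ x y : ℤ, y ≤ f x ↔ g y ≤ x) ∧
    ∀ g : ℤ → ℤ, (∀ x y : ℤ, y ≤ f x ↔ g y ≤ x) →
      Monotone g ∧ ∀ x : ℤ, g (x + b) = g x + a := by
  have adjoint_iff (g : ℤ → ℤ) : (∀ x y : ℤ, y ≤ f x ↔ g y ≤ x) ↔ GaloisConnection g f :=
    ⟨fun h y x => (h x y).symm, fun h x y => (h y x).symm⟩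
  obtain ⟨g, gc⟩ := Int.exists_galoisConnection hf (exists_le_apply_of_map_add_const hper hb)
    fun y => (exists_apply_lt_of_map_add_const hper hb y).imp fun _ => not_le_of_gt
  simp only [adjoint_iff]
  exact ⟨⟨g, gc, fun g' gc' => funext fun y => gc'.l_unique gc fun _ => rfl⟩,
    fun g' gc' => ⟨gc'.monotone_l, gc'.map_add_const_of_map_add_const hper⟩⟩

/-- Let `a, b > 0` and `f : ℤ → ℤ` nondecreasing with `f (x + a) = f x + b`. Then there
is a unique map `f^t : ℤ → ℤ` with `f x ≥ y ↔ x ≥ f^t y` for all `x, y`; moreover any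
such `f^t` is nondecreasing and satisfies `f^t (x + b) = f^t x + a`. -/
theorem stmt12 (a b : ℤ) (ha : 0 < a) (hb : 0 < b) (f : ℤ → ℤ)
    (hf : Monotone f) (hper : ∀ x : ℤ, f (x + a) = f x + b) :
    (∃! g : ℤ → ℤ, ∀ x y : ℤ, y ≤ f x ↔ g y ≤ x) ∧
    ∀ g : ℤ → ℤ, (∀ x y : ℤ, y ≤ f x ↔ g y ≤ x) →
      Monotone g ∧ ∀ x : ℤ, g (x + b) = g x + a :=
  stmt12_general a b hb f hf hper
end

section
/- Let a, b > 0 and f : Z → Z nondecreasing with f(x+a) = f(x)+b, and f^t its transpose defined by f(x) ≥ y ⟺ x ≥ f^t(y). Then the double transpose satisfies (f^t)^t(x+1) = f(x) + 1 for all x ∈ Z. -/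
/-- Let `a, b > 0`, `f : ℤ → ℤ` nondecreasing with `f (x+a) = f x + b`, `g = f^t` its
transpose (characterized by `y ≤ f x ↔ g y ≤ x`) and `h = (f^t)^t` the transpose of
`g` (characterized by `y ≤ g x ↔ h y ≤ x`). Then `(f^t)^t (x+1) = f x + 1` for all `x`. -/
theorem stmt13 (a b : ℤ) (ha : 0 < a) (hb : 0 < b) (f g h : ℤ → ℤ)
    (hf : Monotone f) (hper : ∀ x : ℤ, f (x + a) = f x + b)
    (hg : ∀ x y : ℤ, y ≤ f x ↔ g y ≤ x)
    (hh : ∀ x y : ℤ, y ≤ g x ↔ h y ≤ x) :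
    ∀ x : ℤ, h (x + 1) = f x + 1 := by
  intro x
  have h1 : h (x + 1) ≤ f x + 1 := by
    rw [← hh]
    have : ¬ g (f x + 1) ≤ x := by rw [← hg]; omega
    omega
  have h2 : f x + 1 ≤ h (x + 1) := by
    have hgx : g (f x) ≤ x := (hg x (f x)).mp le_rfl
    have : ¬ h (x + 1) ≤ f x := by rw [← hh]; omega
    omega
  omega
end

section
/- Let E be a finite B-semimodule with free rank 1 (a finite totally ordered set with minimum 0). Then the map y ↦ ℓ_y, where ℓ_y(x) = 0 if x ≤ y and 1 if x > y, is a bijection from E onto the set Hom_B(E, B) of B-linear maps E → B; moreover it is an order-reversing bijection (ℓ identifies Hom_B(E,B) with E equipped with the opposite order and min as addition). -/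
/-! The functional `ℓ_y` is the indicator of the up-set `{x | y < x}`. A `B`-linear map
`L : E → B` is monotone, so `{x | L x = 0}` is a down-set containing `0`; in a finite chain
such a down-set is `{x | x ≤ y}` for its largest element `y`, whence `L = ℓ_y`. -/

section DecideLt

variable {E : Type*} [LinearOrder E]

lemma decide_lt_sup (y x x' : E) :
    decide (y < x ⊔ x') = (decide (y < x) || decide (y < x')) := by
  simp only [lt_sup_iff, Bool.decide_or]

lemma le_iff_forall_decide_lt_le (y y' : E) :
    y ≤ y' ↔ ∀ x : E, decide (y' < x) ≤ decide (y < x) := by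
  refine ⟨fun h x => ?_, fun h => ?_⟩
  · by_cases hx : y' < x
    · simp [hx, h.trans_lt hx]
    · simp [hx]
  · by_contra hle
    simpa [not_le.mp hle, Bool.le_iff_imp] using h y

lemma decide_lt_injective : Function.Injective fun (y x : E) => decide (y < x) := by
  intro y y' h
  have h' : ∀ x, decide (y < x) = decide (y' < x) := congrFun h
  exact le_antisymm ((le_iff_forall_decide_lt_le y y').2 fun x => (h' x).ge)
    ((le_iff_forall_decide_lt_le y' y).2 fun x => (h' x).le)

lemma exists_eq_decide_lt_of_monotone [OrderBot E] [Finite E] {L : E → Bool}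
    (hL : Monotone L) (hbot : L ⊥ = false) : ∃ y : E, L = fun x => decide (y < x) := by
  obtain ⟨y, hy, hmax⟩ :=
    Set.exists_max_image {x | L x = false} id (Set.toFinite _) ⟨⊥, hbot⟩
  refine ⟨y, funext fun x => ?_⟩
  by_cases hx : y < x
  · simpa [hx] using mt (hmax x) (not_le.mpr hx)
  · have hLy : L y = false := hy
    simpa [hx, hLy, Bool.le_iff_imp] using hL (not_lt.mp hx)

end DecideLt

lemma Bool.monotone_of_map_sup {E : Type*} [SemilatticeSup E] {L : E → Bool}
    (hL : ∀ x x' : E, L (x ⊔ x') = (L x || L x')) : Monotone L := by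
  intro x x' hle
  have h := hL x x'
  rw [sup_eq_right.mpr hle] at h
  rw [h]
  exact Bool.left_le_or _ _

/-- Let `E` be a finite `B`-semimodule of free rank 1 (a finite totally ordered set with
minimum `0 = ⊥`, join as addition). The map `y ↦ ℓ_y`, `ℓ_y x = decide (y < x)`, is a
bijection of `E` onto `Hom_B(E, B)` (the maps `L : E → Bool` with `L ⊥ = false` and
`L (x ⊔ x') = L x || L x'`), and it is order-reversing: `y ≤ y' ↔ ℓ_{y'} ≤ ℓ_y`
pointwise, identifying `Hom_B(E,B)` with `E` with the opposite order (min as addition). -/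
theorem stmt16 (E : Type*) [LinearOrder E] [OrderBot E] [Fintype E] :
    let ℓ : E → E → Bool := fun y x => decide (y < x)
    (∀ y : E, ℓ y ⊥ = false ∧ ∀ x x' : E, ℓ y (x ⊔ x') = (ℓ y x || ℓ y x')) ∧
    Function.Injective ℓ ∧
    (∀ L : E → Bool, L ⊥ = false → (∀ x x' : E, L (x ⊔ x') = (L x || L x')) →
      ∃ y : E, L = ℓ y) ∧
    (∀ y y' : E, y ≤ y' ↔ ∀ x : E, ℓ y' x ≤ ℓ y x) :=
  ⟨fun y => ⟨by simp, decide_lt_sup y⟩, decide_lt_injective,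
    fun _ hbot hsup => exists_eq_decide_lt_of_monotone (Bool.monotone_of_map_sup hsup) hbot,
    le_iff_forall_decide_lt_le⟩
end

section
/- Let E = (Z,θ)^∨ with θ(x) = x + n (n ≥ 1), the Z_max-semimodule F^{(n)}, and E* = (Z', θ^{-1})^∨ where Z' is Z with the opposite order. The pairing <x,y>_F := inf { v ∈ F : x ≤ v·y } (for x, y ≠ 0) is well-defined with values in F = Z_max, and the map y ↦ ℓ_y, ℓ_y(x) = <x,y>_F, is an F-linear isomorphism from E* onto Hom_F(E, F). -/
/-- Duality for `E = F^{(n)} = (ℤ, x ↦ x+n)^∨` over `F = Z_max` (encoded via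
`WithBot ℤ`): the pairing `⟨x,y⟩ = u^{g x y}` where `g x y` is the least `k` with
`x ≤ y + k n` is well defined, each `ℓ_y = ⟨·,y⟩` is `F`-linear (preserves `⊥`, joins,
and is equivariant: `ℓ_y (x + kn) = ℓ_y x + k`), `y ↦ ℓ_y` is `F`-linear on
`E* = (ℤ^op, x ↦ x-n)^∨` (it turns `min` into `⊔` and `y - kn` into `+k`), and it is a
bijection from `E*` onto `Hom_F(E, F)`. -/
theorem stmt17 (n : ℕ) (hn : 1 ≤ n) (g : ℤ → ℤ → ℤ)
    (hg : ∀ x y : ℤ, IsLeast {k : ℤ | x ≤ y + k * n} (g x y)) :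
    let ℓ : WithBot ℤ → WithBot ℤ → WithBot ℤ := fun y x =>
      WithBot.recBotCoe ⊥ (fun y0 : ℤ => WithBot.map (fun x0 => g x0 y0) x) y
    (∀ x y : ℤ, ∃ k : ℤ, x ≤ y + k * n) ∧
    (∀ y : WithBot ℤ, ℓ y ⊥ = ⊥) ∧
    (∀ y x x' : WithBot ℤ, ℓ y (x ⊔ x') = ℓ y x ⊔ ℓ y x') ∧
    (∀ (y x : WithBot ℤ) (k : ℤ),
      ℓ y (WithBot.map (fun t => t + k * n) x) = WithBot.map (fun t => t + k) (ℓ y x)) ∧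
    (∀ (y y' : ℤ) (x : WithBot ℤ),
      ℓ ((min y y' : ℤ) : WithBot ℤ) x = ℓ (y : WithBot ℤ) x ⊔ ℓ (y' : WithBot ℤ) x) ∧
    (∀ (y k : ℤ) (x : WithBot ℤ),
      ℓ ((y - k * n : ℤ) : WithBot ℤ) x = WithBot.map (fun t => t + k) (ℓ (y : WithBot ℤ) x)) ∧
    Function.Injective ℓ ∧
    (∀ L : WithBot ℤ → WithBot ℤ, L ⊥ = ⊥ →
      (∀ x x' : WithBot ℤ, L (x ⊔ x') = L x ⊔ L x') →
      (∀ (x : WithBot ℤ) (k : ℤ),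
        L (WithBot.map (fun t => t + k * n) x) = WithBot.map (fun t => t + k) (L x)) →
      ∃ y : WithBot ℤ, L = ℓ y) := by
  intro ℓ
  have hn' : (1 : ℤ) ≤ (n : ℤ) := by exact_mod_cast hn
  -- key characterization
  have hgle : ∀ x y k : ℤ, g x y ≤ k ↔ x ≤ y + k * n := by
    intro x y k
    constructor
    · intro h
      have h1 := (hg x y).1
      have : g x y * n ≤ k * n := by
        apply mul_le_mul_of_nonneg_right h (by linarith)
      simp only [Set.mem_setOf_eq] at h1
      linarith
    · intro h
      exact (hg x y).2 h
  -- value lemmas about g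
  have hgself : ∀ y : ℤ, g y y = 0 := by
    intro y
    have h1 : g y y ≤ 0 := (hgle y y 0).2 (by linarith)
    have h2 : 0 ≤ g y y := by
      by_contra h
      push_neg at h
      have := (hgle y y (g y y)).1 le_rfl
      nlinarith
    omega
  have hgmax : ∀ x x' y : ℤ, g (max x x') y = max (g x y) (g x' y) := by
    intro x x' y
    apply le_antisymm
    · rw [hgle]
      have hx := (hgle x y (g x y)).1 le_rfl
      have h3 : g x y * n ≤ max (g x y) (g x' y) * n :=
        mul_le_mul_of_nonneg_right (le_max_left _ _) (by linarith)
      have hx' := (hgle x' y (g x' y)).1 le_rfl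
      have h4 : g x' y * n ≤ max (g x y) (g x' y) * n :=
        mul_le_mul_of_nonneg_right (le_max_right _ _) (by linarith)
      rcases max_cases x x' with ⟨hm, _⟩ | ⟨hm, _⟩ <;> rw [hm] <;> linarith
    · apply max_le
      · rw [hgle]
        have := (hgle (max x x') y (g (max x x') y)).1 le_rfl
        have hm : x ≤ max x x' := le_max_left _ _
        linarith
      · rw [hgle]
        have := (hgle (max x x') y (g (max x x') y)).1 le_rfl
        have hm : x' ≤ max x x' := le_max_right _ _
        linarith
  have hgshift : ∀ x y k : ℤ, g (x + k * n) y = g x y + k := by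
    intro x y k
    apply le_antisymm
    · rw [hgle]
      have := (hgle x y (g x y)).1 le_rfl
      have : x + k * n ≤ y + (g x y + k) * n := by
        have h : (g x y + k) * n = g x y * n + k * n := by ring
        linarith [h ▸ (le_refl ((g x y + k) * n))]
      linarith [this]
    · have h := (hgle (x + k * n) y (g (x + k * n) y)).1 le_rfl
      have : g x y ≤ g (x + k * n) y - k := by
        rw [hgle]
        have hr : (g (x + k * n) y - k) * n = g (x + k * n) y * n - k * n := by ring
        linarith [hr ▸ (le_refl ((g (x + k * n) y - k) * n))]
      omega
  have hgmin : ∀ x y y' : ℤ, g x (min y y') = max (g x y) (g x y') := by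
    intro x y y'
    apply le_antisymm
    · rw [hgle]
      have h1 := (hgle x y (g x y)).1 le_rfl
      have h2 := (hgle x y' (g x y')).1 le_rfl
      have h3 : g x y * n ≤ max (g x y) (g x y') * n :=
        mul_le_mul_of_nonneg_right (le_max_left _ _) (by linarith)
      have h4 : g x y' * n ≤ max (g x y) (g x y') * n :=
        mul_le_mul_of_nonneg_right (le_max_right _ _) (by linarith)
      rcases min_cases y y' with ⟨hm, _⟩ | ⟨hm, _⟩ <;> rw [hm] <;> linarith
    · apply max_le
      · rw [hgle]
        have := (hgle x (min y y') (g x (min y y'))).1 le_rfl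
        have hm : min y y' ≤ y := min_le_left _ _
        linarith
      · rw [hgle]
        have := (hgle x (min y y') (g x (min y y'))).1 le_rfl
        have hm : min y y' ≤ y' := min_le_right _ _
        linarith
  have hgshift' : ∀ x y k : ℤ, g x (y - k * n) = g x y + k := by
    intro x y k
    apply le_antisymm
    · rw [hgle]
      have := (hgle x y (g x y)).1 le_rfl
      have hr : (g x y + k) * n = g x y * n + k * n := by ring
      linarith [hr ▸ (le_refl ((g x y + k) * n))]
    · have h := (hgle x (y - k * n) (g x (y - k * n))).1 le_rfl
      have : g x y ≤ g x (y - k * n) - k := by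
        rw [hgle]
        have hr : (g x (y - k * n) - k) * n = g x (y - k * n) * n - k * n := by ring
        linarith [hr ▸ (le_refl ((g x (y - k * n) - k) * n))]
      omega
  refine ⟨fun x y => ⟨g x y, (hg x y).1⟩, ?_, ?_, ?_, ?_, ?_, ?_, ?_⟩
  · intro y
    induction y using WithBot.recBotCoe <;> rfl
  · intro y x x'
    induction y using WithBot.recBotCoe with
    | bot => simp [ℓ]
    | coe y0 =>
      induction x using WithBot.recBotCoe with
      | bot => simp [ℓ]
      | coe a =>
        induction x' using WithBot.recBotCoe with
        | bot => simp [ℓ]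
        | coe b =>
          simp only [ℓ, WithBot.recBotCoe_coe, ← WithBot.coe_sup, WithBot.map_coe,
            WithBot.coe_inj]
          exact hgmax a b y0
  · intro y x k
    induction y using WithBot.recBotCoe with
    | bot => simp [ℓ]
    | coe y0 =>
      induction x using WithBot.recBotCoe with
      | bot => simp [ℓ]
      | coe a =>
        simp only [ℓ, WithBot.recBotCoe_coe, WithBot.map_coe, WithBot.coe_inj]
        exact hgshift a y0 k
  · intro y y' x
    induction x using WithBot.recBotCoe with
    | bot =>
      simp only [ℓ, WithBot.recBotCoe_coe, WithBot.map_bot, bot_sup_eq]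
    | coe a =>
      simp only [ℓ, WithBot.recBotCoe_coe, WithBot.map_coe, ← WithBot.coe_sup,
        WithBot.coe_inj]
      exact hgmin a y y'
  · intro y k x
    induction x using WithBot.recBotCoe with
    | bot =>
      simp only [ℓ, WithBot.recBotCoe_coe, WithBot.map_bot]
    | coe a =>
      simp only [ℓ, WithBot.recBotCoe_coe, WithBot.map_coe, WithBot.coe_inj]
      exact hgshift' a y k
  · -- injectivity
    intro y y' h
    induction y using WithBot.recBotCoe with
    | bot =>
      induction y' using WithBot.recBotCoe with
      | bot => rfl
      | coe b =>
        exfalso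
        have := congrFun h (b : WithBot ℤ)
        simp only [ℓ, WithBot.recBotCoe_bot, WithBot.recBotCoe_coe, WithBot.map_coe] at this
        exact (WithBot.bot_ne_coe).elim (by exact_mod_cast this)
    | coe a =>
      induction y' using WithBot.recBotCoe with
      | bot =>
        exfalso
        have := congrFun h (a : WithBot ℤ)
        simp only [ℓ, WithBot.recBotCoe_bot, WithBot.recBotCoe_coe, WithBot.map_coe] at this
        exact (WithBot.bot_ne_coe).elim (by exact_mod_cast this.symm)
      | coe b =>
        have hab : ∀ x : ℤ, g x a = g x b := by
          intro x
          have := congrFun h (x : WithBot ℤ)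
          simp only [ℓ, WithBot.recBotCoe_coe, WithBot.map_coe] at this
          exact_mod_cast this
        have h1 : g b a = 0 := (hab b).trans (hgself b)
        have h2 : g a b = 0 := (hab a).symm.trans (hgself a)
        have hba : b ≤ a := by have := (hgle b a 0).1 (h1.le); linarith
        have hab' : a ≤ b := by have := (hgle a b 0).1 (h2.le); linarith
        exact congrArg _ (le_antisymm hab' hba)
  · -- surjectivity
    intro L hLbot hLsup hLeq
    have hmono : ∀ x x' : WithBot ℤ, x ≤ x' → L x ≤ L x' := by
      intro x x' hxx
      have : L x' = L x ⊔ L x' := by rw [← hLsup, sup_eq_right.mpr hxx]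
      rw [this]; exact le_sup_left
    by_cases hex : ∃ t : ℤ, L (t : WithBot ℤ) ≠ ⊥
    · obtain ⟨x0, hx0⟩ := hex
      -- all values on ℤ are non-bot
      have hne : ∀ t : ℤ, ∃ m : ℤ, L (t : WithBot ℤ) = (m : WithBot ℤ) := by
        intro t
        set k : ℤ := min (t - x0) 0 with hk
        have hkn : x0 + k * n ≤ t := by
          have hk0 : k ≤ 0 := min_le_right _ _
          have hk1 : k ≤ t - x0 := min_le_left _ _
          nlinarith
        have h1 : L ((x0 + k * n : ℤ) : WithBot ℤ) =
            WithBot.map (fun t => t + k) (L (x0 : WithBot ℤ)) := by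
          have := hLeq (x0 : WithBot ℤ) k
          rwa [WithBot.map_coe] at this
        obtain ⟨m0, hm0⟩ := WithBot.ne_bot_iff_exists.mp hx0
        have h2 : L ((x0 + k * n : ℤ) : WithBot ℤ) = ((m0 + k : ℤ) : WithBot ℤ) := by
          rw [h1, ← hm0, WithBot.map_coe]
        have h3 : ((m0 + k : ℤ) : WithBot ℤ) ≤ L (t : WithBot ℤ) := by
          rw [← h2]; exact hmono _ _ (by exact_mod_cast hkn)
        have hne' : L (t : WithBot ℤ) ≠ ⊥ := by
          intro hb
          rw [hb] at h3
          simp at h3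
        obtain ⟨m, hm⟩ := WithBot.ne_bot_iff_exists.mp hne'
        exact ⟨m, hm.symm⟩
      choose f hf using hne
      have hfmono : ∀ s t : ℤ, s ≤ t → f s ≤ f t := by
        intro s t hst
        have := hmono (s : WithBot ℤ) (t : WithBot ℤ) (by exact_mod_cast hst)
        rw [hf s, hf t] at this
        exact_mod_cast this
      have hfeq : ∀ t k : ℤ, f (t + k * n) = f t + k := by
        intro t k
        have := hLeq (t : WithBot ℤ) k
        rw [WithBot.map_coe, hf (t + k * n), hf t, WithBot.map_coe] at this
        exact_mod_cast this
      -- the set {t | f t ≤ 0} is nonempty and bounded above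
      have hinh : ∃ t : ℤ, f t ≤ 0 := by
        refine ⟨x0 + (-f x0) * n, ?_⟩
        rw [hfeq]; omega
      have hbdd : ∃ b : ℤ, ∀ t : ℤ, f t ≤ 0 → t ≤ b := by
        refine ⟨x0 + (1 - f x0) * n, ?_⟩
        intro t ht
        by_contra hc
        push_neg at hc
        have := hfmono _ _ hc.le
        rw [hfeq] at this
        omega
      obtain ⟨y, hy1, hy2⟩ := Int.exists_greatest_of_bdd hbdd hinh
      refine ⟨(y : WithBot ℤ), ?_⟩
      funext x
      induction x using WithBot.recBotCoe with
      | bot => simpa [ℓ] using hLbot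
      | coe a =>
        show L _ = WithBot.map _ (a : WithBot ℤ)
        rw [WithBot.map_coe, hf a]
        congr 1
        -- f a = g a y
        have hle1 : g a y ≤ f a := by
          rw [hgle]
          have : f (a + (-(f a)) * n) ≤ 0 := by rw [hfeq]; omega
          have := hy2 _ this
          linarith
        have hle2 : f a ≤ g a y := by
          have h1 := (hgle a y (g a y)).1 le_rfl
          have h2 := hfmono a (y + g a y * n) h1
          have h3 : f (y + g a y * n) = f y + g a y := hfeq y (g a y)
          omega
        omega
    · push_neg at hex
      refine ⟨⊥, ?_⟩
      funext x
      induction x using WithBot.recBotCoe with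
      | bot => simpa [ℓ] using hLbot
      | coe a => simpa [ℓ] using hex a
end

section
/- Let σ : {0,…,n} → {0,…,m} be any map of finite sets, with cyclic descent number k = cdesc(σ) = #{ j ∈ {0,…,n} : σ(j+1) < σ(j) } (indices mod n+1, so σ(n+1) := σ(0)). Then there exists a nondecreasing map f : Z → Z with f(x + (n+1)) = f(x) + k(m+1) for all x and f(x) ≡ σ(x) mod (m+1) for all x ∈ {0,…,n}; moreover k is the smallest integer with this property, and for this minimal k the map f with f(0) = σ(0) is unique, given by f(x) = σ(x) + (m+1)·c(x) where c(x) = #{ j < x : σ(j+1) < σ(j) }. -/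
/-!
Let `gap j ∈ [0, m]` be the residue of `σ (j + 1) - σ j` modulo `m + 1`; it exceeds
`σ (j + 1) - σ j` by `m + 1` exactly at a cyclic descent, so the gaps over one period sum to
`k (m + 1)`. For any lift `f` of degree `k'`, each step `f (j + 1) - f j` is nonnegative and
congruent to `σ (j + 1) - σ j`, hence at least `gap j`; summing over a period gives `k ≤ k'`,
and for `k' = k` every step equals its gap, which pins down `f` on `{0, …, n}` from `f 0`.
Conversely, the partial sums of the gaps, extended quasi-periodically, form a lift of degree `k`.
-/

open Finset

theorem Fin.sum_Iio_sub {G : Type*} [AddCommGroup G] {N : ℕ} (h : ℕ → G) (x : Fin N) :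
    ∑ j ∈ Iio x, (h (j + 1) - h j) = h x - h 0 := by
  rw [← sum_range_sub, ← Nat.Iio_eq_range, ← Fin.map_valEmbedding_Iio, sum_map]
  rfl

def quasiPeriodicExtension (N D : ℤ) (g : ℤ → ℤ) (x : ℤ) : ℤ := x / N * D + g (x % N)

section QuasiPeriodicExtension

variable {N D : ℤ} {g : ℤ → ℤ}

theorem quasiPeriodicExtension_add_period (hN : N ≠ 0) (x : ℤ) :
    quasiPeriodicExtension N D g (x + N) = quasiPeriodicExtension N D g x + D := by
  have hq : (x + N) / N = x / N + 1 := by simpa using Int.add_mul_ediv_right x 1 hN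
  simp only [quasiPeriodicExtension, hq, Int.add_emod_right]
  ring

theorem quasiPeriodicExtension_of_mem_Ico {x : ℤ} (hx : x ∈ Set.Ico 0 N) :
    quasiPeriodicExtension N D g x = g x := by
  simp [quasiPeriodicExtension, Int.ediv_eq_zero_of_lt hx.1 hx.2, Int.emod_eq_of_lt hx.1 hx.2]

theorem monotone_quasiPeriodicExtension (hN : 0 < N) (hg : MonotoneOn g (Set.Icc 0 N))
    (hD : g N = g 0 + D) : Monotone (quasiPeriodicExtension N D g) := by
  refine monotone_int_of_le_succ fun x => ?_
  obtain ⟨hx, hr0, hrN⟩ := (Int.ediv_emod_unique (a := x) hN).1 ⟨rfl, rfl⟩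
  unfold quasiPeriodicExtension
  obtain hr | hr := lt_or_eq_of_le (show x % N + 1 ≤ N by omega)
  · obtain ⟨hq₁, hr₁⟩ :=
      (Int.ediv_emod_unique (a := x + 1) (q := x / N) hN).2 ⟨by linarith, by omega, hr⟩
    rw [hq₁, hr₁]
    gcongr
    exact hg ⟨hr0, by omega⟩ ⟨by omega, by omega⟩ (by omega)
  · obtain ⟨hq₁, hr₁⟩ :=
      (Int.ediv_emod_unique (a := x + 1) (q := x / N + 1) hN).2 ⟨by linarith, le_rfl, hN⟩
    rw [hq₁, hr₁, add_mul, one_mul, add_assoc, add_comm D, ← hD]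
    gcongr
    exact hg ⟨hr0, by omega⟩ ⟨hN.le, le_rfl⟩ (by omega)

end QuasiPeriodicExtension

section CyclicDescents

variable {n m : ℕ} (σ : Fin (n + 1) → Fin (m + 1))

def cyclicDescents : Finset (Fin (n + 1)) := univ.filter fun j => σ (j + 1) < σ j

def cyclicDescentsBefore (x : Fin (n + 1)) : Finset (Fin (n + 1)) :=
  univ.filter fun j => (j : ℕ) < (x : ℕ) ∧ σ (j + 1) < σ j

def cyclicGap (j : Fin (n + 1)) : ℤ := ((σ (j + 1) : ℤ) - σ j) % (m + 1)

theorem cyclicGap_nonneg (j : Fin (n + 1)) : 0 ≤ cyclicGap σ j :=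
  Int.emod_nonneg _ (by positivity)

theorem cyclicGap_eq (j : Fin (n + 1)) :
    cyclicGap σ j = σ (j + 1) - σ j + if σ (j + 1) < σ j then (m + 1 : ℤ) else 0 := by
  have hj := (σ j).isLt
  have hj' := (σ (j + 1)).isLt
  unfold cyclicGap
  split_ifs with h <;> rw [Fin.lt_def] at h
  · rw [← Int.add_emod_right, Int.emod_eq_of_lt] <;> omega
  · rw [Int.emod_eq_of_lt] <;> omega

theorem sum_cyclicGap : ∑ j, cyclicGap σ j = #(cyclicDescents σ) * (m + 1) := by
  have hrot : ∑ j, (σ (j + 1) : ℤ) = ∑ j, (σ j : ℤ) :=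
    Equiv.sum_comp (Equiv.addRight 1) (fun j => (σ j : ℤ))
  simp only [cyclicGap_eq, sum_add_distrib, sum_sub_distrib, hrot, sub_self, zero_add,
    ← sum_filter, sum_const, nsmul_eq_mul, cyclicDescents]
  ring

open Fin.NatCast in
theorem sum_Iio_cyclicGap (x : Fin (n + 1)) :
    σ 0 + ∑ j ∈ Iio x, cyclicGap σ j = σ x + (m + 1) * #(cyclicDescentsBefore σ x) := by
  have htel : ∑ j ∈ Iio x, ((σ (j + 1) : ℤ) - σ j) = σ x - σ 0 := by
    simpa only [Nat.cast_add, Nat.cast_one, Nat.cast_zero, Fin.cast_val_eq_self] using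
      Fin.sum_Iio_sub (fun i : ℕ => (σ (i : Fin (n + 1)) : ℤ)) x
  have hbefore : (Iio x).filter (fun j => σ (j + 1) < σ j) = cyclicDescentsBefore σ x := by
    ext j; simp [cyclicDescentsBefore]
  simp only [cyclicGap_eq, sum_add_distrib, htel, ← sum_filter, hbefore, sum_const, nsmul_eq_mul]
  ring

def IsLift (k : ℕ) (f : ℤ → ℤ) : Prop :=
  Monotone f ∧ (∀ x : ℤ, f (x + (n + 1)) = f x + k * (m + 1)) ∧
    ∀ j : Fin (n + 1), Int.ModEq (m + 1) (f (j : ℤ)) (σ j : ℤ)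

namespace IsLift

variable {σ} {k : ℕ} {f : ℤ → ℤ}

theorem modEq_succ (hf : IsLift σ k f) (j : Fin (n + 1)) :
    f ((j : ℤ) + 1) ≡ σ (j + 1) [ZMOD m + 1] := by
  induction j using Fin.lastCases with
  | last =>
    have hlast : ((Fin.last n : ℕ) : ℤ) + 1 = 0 + (n + 1) := by simp
    rw [hlast, hf.2.1, Fin.last_add_one]
    have h0 : f 0 ≡ σ 0 [ZMOD m + 1] := by simpa using hf.2.2 0
    exact (Int.add_mul_emod_self_right _ _ _).trans h0
  | cast i => simpa [Fin.coeSucc_eq_succ] using hf.2.2 i.succ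

theorem cyclicGap_le (hf : IsLift σ k f) (j : Fin (n + 1)) :
    cyclicGap σ j ≤ f ((j : ℤ) + 1) - f j := by
  have hstep : 0 ≤ f ((j : ℤ) + 1) - f j := sub_nonneg.2 (hf.1 (by omega))
  have hgap : cyclicGap σ j = (f ((j : ℤ) + 1) - f j) % (m + 1) :=
    ((hf.modEq_succ j).sub (hf.2.2 j)).eq.symm
  have hquot := mul_nonneg (show (0 : ℤ) ≤ m + 1 by positivity)
    (Int.ediv_nonneg hstep (show (0 : ℤ) ≤ m + 1 by positivity))
  have := Int.emod_add_mul_ediv (f ((j : ℤ) + 1) - f j) (m + 1)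
  linarith

theorem sum_sub (hf : IsLift σ k f) :
    ∑ j : Fin (n + 1), (f ((j : ℤ) + 1) - f j) = k * (m + 1) := by
  have htel := sum_range_sub (fun i : ℕ => f i) (n + 1)
  rw [← Fin.sum_univ_eq_sum_range (fun i : ℕ => f ↑(i + 1) - f i)] at htel
  push_cast at htel
  rw [htel, ← zero_add ((n : ℤ) + 1), hf.2.1, add_sub_cancel_left]

theorem card_cyclicDescents_le (hf : IsLift σ k f) : #(cyclicDescents σ) ≤ k := by
  have hle := sum_le_sum fun j (_ : j ∈ univ) => hf.cyclicGap_le j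
  rw [sum_cyclicGap, hf.sum_sub] at hle
  exact_mod_cast le_of_mul_le_mul_right hle (by positivity)

theorem sub_eq_cyclicGap (hf : IsLift σ #(cyclicDescents σ) f) (j : Fin (n + 1)) :
    f ((j : ℤ) + 1) - f j = cyclicGap σ j := by
  have hsum : ∑ j : Fin (n + 1), (f ((j : ℤ) + 1) - f j - cyclicGap σ j) = 0 := by
    rw [sum_sub_distrib, hf.sum_sub, sum_cyclicGap, sub_self]
  have := (sum_eq_zero_iff_of_nonneg fun j _ => sub_nonneg.2 (hf.cyclicGap_le j)).1 hsum j
    (mem_univ j)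
  linarith

theorem apply_eq (hf : IsLift σ #(cyclicDescents σ) f) (h0 : f 0 = σ 0) (x : Fin (n + 1)) :
    f x = σ x + (m + 1) * #(cyclicDescentsBefore σ x) := by
  have htel := Fin.sum_Iio_sub (fun i : ℕ => f i) x
  push_cast at htel
  rw [← sum_Iio_cyclicGap, ← h0, ← sum_congr rfl fun j _ => hf.sub_eq_cyclicGap j, htel]
  ring

end IsLift

def canonicalLift : ℤ → ℤ :=
  quasiPeriodicExtension (n + 1) (#(cyclicDescents σ) * (m + 1)) fun t =>
    σ 0 + ∑ j ∈ univ.filter (fun j : Fin (n + 1) => (j : ℤ) < t), cyclicGap σ j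

theorem canonicalLift_apply (x : Fin (n + 1)) :
    canonicalLift σ x = σ x + (m + 1) * #(cyclicDescentsBefore σ x) := by
  rw [canonicalLift, quasiPeriodicExtension_of_mem_Ico ⟨by positivity, by omega⟩,
    ← sum_Iio_cyclicGap]
  congr 2
  ext j
  simp

theorem isLift_canonicalLift : IsLift σ #(cyclicDescents σ) (canonicalLift σ) := by
  refine ⟨monotone_quasiPeriodicExtension (by positivity) ?_ ?_,
    quasiPeriodicExtension_add_period (by positivity), fun x => ?_⟩
  · intro s _ t _ hst
    refine add_le_add le_rfl (sum_le_sum_of_subset_of_nonneg ?_ fun j _ _ => cyclicGap_nonneg σ j)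
    exact monotone_filter_right _ fun j _ (hj : (j : ℤ) < s) => hj.trans_le hst
  · have hall : univ.filter (fun j : Fin (n + 1) => (j : ℤ) < n + 1) = univ :=
      filter_true_of_mem fun j _ => by omega
    have hnone : univ.filter (fun j : Fin (n + 1) => (j : ℤ) < 0) = ∅ :=
      filter_false_of_mem fun j _ => by omega
    simp only [hall, hnone, sum_empty, sum_cyclicGap]
    ring
  · rw [canonicalLift_apply]
    exact Int.add_mul_emod_self_left _ _ _

end CyclicDescents

/-- Lift of maps of finite sets and the cyclic descent number. Let
`σ : {0,…,n} → {0,…,m}` with cyclic descent number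
`k = #{j : σ(j+1) < σ(j)}` (indices cyclic mod `n+1`) and
`c x = #{j < x : σ(j+1) < σ(j)}`. Then there is a nondecreasing `f : ℤ → ℤ` with
`f (x + (n+1)) = f x + k(m+1)` and `f x ≡ σ x mod (m+1)` on `{0,…,n}`; `k` is the
smallest integer with this property; and for this `k`, the lift with `f 0 = σ 0` is
unique, given by `f x = σ x + (m+1) c x`. -/
theorem stmt18 (n m : ℕ) (σ : Fin (n + 1) → Fin (m + 1)) :
    let k : ℕ := (Finset.univ.filter fun j : Fin (n + 1) => σ (j + 1) < σ j).card
    let c : Fin (n + 1) → ℕ := fun x =>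
      (Finset.univ.filter fun j : Fin (n + 1) => (j : ℕ) < (x : ℕ) ∧ σ (j + 1) < σ j).card
    (∃ f : ℤ → ℤ, Monotone f ∧ (∀ x : ℤ, f (x + (n + 1)) = f x + k * (m + 1)) ∧
        ∀ j : Fin (n + 1), Int.ModEq (m + 1) (f (j : ℤ)) (σ j : ℤ)) ∧
    (∀ k' : ℕ,
      (∃ f : ℤ → ℤ, Monotone f ∧ (∀ x : ℤ, f (x + (n + 1)) = f x + k' * (m + 1)) ∧
        ∀ j : Fin (n + 1), Int.ModEq (m + 1) (f (j : ℤ)) (σ j : ℤ)) → k ≤ k') ∧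
    (∀ f : ℤ → ℤ, Monotone f → (∀ x : ℤ, f (x + (n + 1)) = f x + k * (m + 1)) →
      (∀ j : Fin (n + 1), Int.ModEq (m + 1) (f (j : ℤ)) (σ j : ℤ)) →
      f 0 = ((σ 0 : ℕ) : ℤ) →
      ∀ j : Fin (n + 1), f (j : ℤ) = (σ j : ℤ) + (m + 1) * (c j : ℤ)) := by
  intro k c
  exact ⟨⟨canonicalLift σ, isLift_canonicalLift σ⟩,
    fun _ ⟨_, hf⟩ => IsLift.card_cyclicDescents_le (σ := σ) hf,
    fun _ hmono hshift hmod h0 => IsLift.apply_eq (σ := σ) ⟨hmono, hshift, hmod⟩ h0⟩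
end

section
/- Let E be a totally ordered set with a minimum element 0 (a B-semimodule of free rank 1), and define on E⊗S := (E × {±1}) / ((0,1)∼(0,-1)) the multivalued addition: x ⌣ y = x if |x| > |y| or x = y; x ⌣ y = y if |x| < |y| or x = y; and x ⌣ (-x) = [-x, x] = { z : |z| ≤ |x| }. Then (E⊗S, ⌣, 0) is a canonical hypergroup: ⌣ is commutative, associative (as sets: (x⌣y)⌣z = x⌣(y⌣z)), 0 is neutral, every element x has a unique inverse -x with 0 ∈ x ⌣ (-x), and x ∈ y ⌣ z implies z ∈ x ⌣ (-y). -/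
/-- The symmetrization `E ⊗_B S` of a `B`-semimodule `E` of free rank 1 (a totally
ordered set with least element `0 = ⊥`): its elements are `0` together with signed
nonzero elements `±x`, encoded as `Option ({x : E // x ≠ ⊥} × Bool)`. -/
abbrev SHyp (E : Type*) [LinearOrder E] [OrderBot E] := Option ({ x : E // x ≠ ⊥ } × Bool)

/-- The absolute value `|·| : E ⊗_B S → E`. -/
def sAbs {E : Type*} [LinearOrder E] [OrderBot E] : SHyp E → E
  | none => ⊥
  | some (x, _) => x.1

/-- The negation on `E ⊗_B S`. -/
def sNeg {E : Type*} [LinearOrder E] [OrderBot E] : SHyp E → SHyp E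
  | none => none
  | some (x, s) => some (x, !s)

/-- The multivalued addition `x ⌣ y` on `E ⊗_B S`: `x` if `|x| > |y|` or `x = y`; `y` if
`|x| < |y|` or `x = y`; and the interval `[-x, x] = {z : |z| ≤ |x|}` if `y = -x`. -/
def sAdd {E : Type*} [LinearOrder E] [OrderBot E] (x y : SHyp E) : Set (SHyp E) :=
  if x = y then {x}
  else if sAbs y < sAbs x then {x}
  else if sAbs x < sAbs y then {y}
  else {z | sAbs z ≤ sAbs x}

section Aux

variable {E : Type*} [LinearOrder E] [OrderBot E]

lemma sNeg_sNeg (x : SHyp E) : sNeg (sNeg x) = x := by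
  rcases x with _ | ⟨a, s⟩ <;> simp [sNeg]

lemma sAbs_sNeg (x : SHyp E) : sAbs (sNeg x) = sAbs x := by
  rcases x with _ | ⟨a, s⟩ <;> simp [sNeg, sAbs]

lemma sAbs_none : sAbs (none : SHyp E) = ⊥ := rfl

lemma sAbs_eq_bot {x : SHyp E} : sAbs x = ⊥ ↔ x = none := by
  rcases x with _ | ⟨a, s⟩
  · simp [sAbs]
  · simp [sAbs, a.2]

lemma sNeg_ne_self {x : SHyp E} (h : x ≠ none) : sNeg x ≠ x := by
  rcases x with _ | ⟨a, s⟩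
  · simp at h
  · simp [sNeg]

lemma eq_or_eq_sNeg_of_sAbs_eq {x y : SHyp E} (h : sAbs x = sAbs y) :
    y = x ∨ y = sNeg x := by
  rcases x with _ | ⟨a, s⟩ <;> rcases y with _ | ⟨b, t⟩
  · left; rfl
  · simp [sAbs] at h; exact absurd h.symm b.2
  · simp [sAbs] at h; exact absurd h a.2
  · simp [sAbs] at h
    have hab : a = b := Subtype.ext h
    subst hab
    rcases Bool.eq_or_eq_not t s with ht | ht
    · left; simp [ht]
    · right; simp [sNeg, ht]

lemma ne_of_sAbs_ne {x y : SHyp E} (h : sAbs x ≠ sAbs y) : x ≠ y := by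
  intro h'; exact h (by rw [h'])

lemma sAdd_self (x : SHyp E) : sAdd x x = {x} := by simp [sAdd]

lemma sAdd_of_lt {x y : SHyp E} (h : sAbs y < sAbs x) : sAdd x y = {x} := by
  rw [sAdd, if_neg (ne_of_sAbs_ne h.ne'), if_pos h]

lemma sAdd_of_lt' {x y : SHyp E} (h : sAbs x < sAbs y) : sAdd x y = {y} := by
  rw [sAdd, if_neg (ne_of_sAbs_ne h.ne), if_neg (not_lt.2 h.le), if_pos h]

lemma sAdd_sNeg_self (x : SHyp E) : sAdd x (sNeg x) = {v | sAbs v ≤ sAbs x} := by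
  rcases eq_or_ne x none with rfl | hx
  · ext u
    simp [sAdd, sNeg, sAbs_none, le_bot_iff, sAbs_eq_bot]
  · rw [sAdd, if_neg (Ne.symm (sNeg_ne_self hx)), sAbs_sNeg, if_neg (lt_irrefl _),
      if_neg (lt_irrefl _)]

lemma sAdd_comm (x y : SHyp E) : sAdd x y = sAdd y x := by
  rcases eq_or_ne x y with rfl | hxy
  · rfl
  · rcases lt_trichotomy (sAbs x) (sAbs y) with h | h | h
    · rw [sAdd_of_lt' h, sAdd_of_lt h]
    · rcases eq_or_eq_sNeg_of_sAbs_eq h with h' | h'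
      · exact absurd h'.symm hxy
      · subst h'
        have h2 := sAdd_sNeg_self (sNeg x)
        rw [sNeg_sNeg, sAbs_sNeg] at h2
        rw [sAdd_sNeg_self, h2]
    · rw [sAdd_of_lt h, sAdd_of_lt' h]

lemma sAdd_none (x : SHyp E) : sAdd none x = {x} := by
  rcases eq_or_ne x none with rfl | hx
  · rfl
  · have hb : (⊥ : E) < sAbs x :=
      (bot_le (a := sAbs x)).lt_of_ne fun h => hx (sAbs_eq_bot.mp h.symm)
    rw [sAdd, if_neg (Ne.symm hx), sAbs_none, if_neg (not_lt.2 bot_le), if_pos hb]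

lemma sAbs_le_of_mem {u x y : SHyp E} (h : u ∈ sAdd x y) :
    sAbs u ≤ max (sAbs x) (sAbs y) := by
  rw [sAdd] at h
  split_ifs at h with h1 h2 h3
  · subst h; exact le_max_left _ _
  · subst h; exact le_max_left _ _
  · subst h; exact le_max_right _ _
  · exact h.trans (le_max_left _ _)

lemma biUnion_interval (a : E) (z : SHyp E) :
    (⋃ w ∈ {v : SHyp E | sAbs v ≤ a}, sAdd w z)
      = if sAbs z ≤ a then {v : SHyp E | sAbs v ≤ a} else {z} := by
  split_ifs with h
  · ext u
    simp only [Set.mem_iUnion, Set.mem_setOf_eq, exists_prop]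
    constructor
    · rintro ⟨w, hw, hu⟩
      exact (sAbs_le_of_mem hu).trans (max_le hw h)
    · intro hu
      rcases le_or_gt (sAbs u) (sAbs z) with h' | h'
      · refine ⟨sNeg z, (sAbs_sNeg z).le.trans h, ?_⟩
        rw [sAdd_comm, sAdd_sNeg_self]
        exact h'
      · exact ⟨u, hu, by rw [sAdd_of_lt h']; rfl⟩
  · push_neg at h
    ext u
    simp only [Set.mem_iUnion, Set.mem_setOf_eq, exists_prop, Set.mem_singleton_iff]
    constructor
    · rintro ⟨w, hw, hu⟩
      rw [sAdd_of_lt' (hw.trans_lt h)] at hu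
      exact hu
    · rintro rfl
      exact ⟨none, by simp [sAbs_none], by rw [sAdd_none]; rfl⟩

lemma sumF (x y z : SHyp E) : (⋃ w ∈ sAdd x y, sAdd w z) =
    if y = sNeg x then
      (if sAbs z ≤ sAbs x then {v : SHyp E | sAbs v ≤ sAbs x} else {z})
    else if sAbs y ≤ sAbs x then sAdd x z else sAdd y z := by
  split_ifs with h1 h2 h2
  · subst h1; rw [sAdd_sNeg_self, biUnion_interval, if_pos h2]
  · subst h1; rw [sAdd_sNeg_self, biUnion_interval, if_neg h2]
  · rcases eq_or_ne x y with rfl | hxy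
    · rw [sAdd_self, Set.biUnion_singleton]
    · rcases lt_or_eq_of_le h2 with h | h
      · rw [sAdd_of_lt h, Set.biUnion_singleton]
      · rcases eq_or_eq_sNeg_of_sAbs_eq h.symm with h' | h'
        · exact absurd h'.symm hxy
        · exact absurd h' h1
  · rw [sAdd_of_lt' (not_le.1 h2), Set.biUnion_singleton]

lemma sAdd_assoc (x y z : SHyp E) :
    (⋃ w ∈ sAdd x y, sAdd w z) = ⋃ w ∈ sAdd y z, sAdd x w := by
  have hR : (⋃ w ∈ sAdd y z, sAdd x w) = ⋃ w ∈ sAdd y z, sAdd w x :=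
    Set.iUnion_congr fun w => Set.iUnion_congr fun _ => by rw [sAdd_comm]
  rw [hR, sumF, sumF]
  by_cases h1 : y = sNeg x <;> by_cases h2 : z = sNeg y
  · -- y = -x, z = -y = x
    subst h1; rw [sNeg_sNeg] at h2
    rw [h2, sNeg_sNeg, if_pos rfl, if_pos rfl, sAbs_sNeg]
  · -- y = -x, z ≠ -y
    subst h1
    rw [if_pos rfl, if_neg h2, sAbs_sNeg]
    rcases le_or_gt (sAbs z) (sAbs x) with h | h
    · rw [if_pos h, if_pos h]
      conv_rhs => rw [sAdd_comm, sAdd_sNeg_self]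
    · rw [if_neg (not_le.2 h), if_neg (not_le.2 h), sAdd_of_lt h]
  · -- y ≠ -x, z = -y
    subst h2
    rw [if_neg h1, if_pos rfl]
    rcases lt_trichotomy (sAbs x) (sAbs y) with h | h | h
    · rw [if_neg (not_le.2 h), if_pos h.le, sAdd_sNeg_self]
    · rw [if_pos h.ge, if_pos h.le]
      have hxy : sNeg y ≠ x := fun h' => h1 (by rw [← h', sNeg_sNeg])
      have hnn : sNeg y = sNeg x := by
        rcases eq_or_eq_sNeg_of_sAbs_eq (x := x) (y := sNeg y)
          (by rw [sAbs_sNeg, ← h]) with h' | h'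
        · exact absurd h' hxy
        · exact h'
      rw [hnn, sAdd_sNeg_self, h]
    · rw [if_pos h.le, if_neg (not_le.2 h),
        sAdd_of_lt (show sAbs (sNeg y) < sAbs x by rwa [sAbs_sNeg])]
  · -- y ≠ -x, z ≠ -y
    rw [if_neg h1, if_neg h2]
    rcases lt_trichotomy (sAbs x) (sAbs y) with hab | hab | hab
    · rw [if_neg (not_le.2 hab)]
      rcases lt_trichotomy (sAbs y) (sAbs z) with hbc | hbc | hbc
      · rw [if_neg (not_le.2 hbc), sAdd_of_lt' hbc, sAdd_of_lt (hab.trans hbc)]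
      · have hzy : z = y := by
          rcases eq_or_eq_sNeg_of_sAbs_eq hbc with h' | h'
          · exact h'
          · exact absurd h' h2
        subst hzy
        rw [if_pos le_rfl, sAdd_self, sAdd_of_lt hab]
      · rw [if_pos hbc.le, sAdd_of_lt hbc, sAdd_of_lt hab]
    · have hyx : y = x := by
        rcases eq_or_eq_sNeg_of_sAbs_eq hab with h' | h'
        · exact h'
        · exact absurd h' h1
      subst hyx
      rw [if_pos le_rfl]
      rcases le_or_gt (sAbs z) (sAbs y) with hbc | hbc
      · rw [if_pos hbc]
        rcases lt_or_eq_of_le hbc with h | h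
        · rw [sAdd_of_lt h, sAdd_self]
        · have hzy : z = y := by
            rcases eq_or_eq_sNeg_of_sAbs_eq h.symm with h' | h'
            · exact h'
            · exact absurd h' h2
          subst hzy
          rfl
      · rw [if_neg (not_le.2 hbc), sAdd_comm]
    · rw [if_pos hab.le]
      rcases le_or_gt (sAbs z) (sAbs y) with hbc | hbc
      · rw [if_pos hbc, sAdd_of_lt (hbc.trans_lt hab), sAdd_of_lt' hab]
      · rw [if_neg (not_le.2 hbc), sAdd_comm]

end Aux

/-- `(E ⊗_B S, ⌣, 0)` is a canonical hypergroup: `⌣` is commutative and associative (as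
sets), `0` is neutral, every element has a unique additive inverse, and reversibility
`x ∈ y ⌣ z → z ∈ x ⌣ (-y)` holds. -/
theorem stmt19 (E : Type*) [LinearOrder E] [OrderBot E] :
    (∀ x y : SHyp E, sAdd x y = sAdd y x) ∧
    (∀ x y z : SHyp E, (⋃ w ∈ sAdd x y, sAdd w z) = ⋃ w ∈ sAdd y z, sAdd x w) ∧
    (∀ x : SHyp E, sAdd (none : SHyp E) x = {x}) ∧
    (∀ x : SHyp E, ∃! y : SHyp E, (none : SHyp E) ∈ sAdd x y) ∧
    (∀ x y z : SHyp E, x ∈ sAdd y z → z ∈ sAdd x (sNeg y)) := by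
  refine ⟨sAdd_comm, sAdd_assoc, sAdd_none, fun x => ⟨sNeg x, ?_, ?_⟩, ?_⟩
  · show (none : SHyp E) ∈ sAdd x (sNeg x)
    rw [sAdd_sNeg_self]
    exact bot_le
  · intro y hy
    rw [sAdd] at hy
    split_ifs at hy with h1 h2 h3
    · -- x = y, none = x
      simp only [Set.mem_singleton_iff] at hy
      subst h1; rw [← hy]; rfl
    · simp only [Set.mem_singleton_iff] at hy
      rw [← hy, sAbs] at h2
      exact absurd h2 (not_lt.2 bot_le)
    · simp only [Set.mem_singleton_iff] at hy
      subst hy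
      rw [sAbs] at h3
      exact absurd h3 (not_lt.2 bot_le)
    · push_neg at h2 h3
      have habs : sAbs x = sAbs y := le_antisymm h2 h3
      rcases eq_or_eq_sNeg_of_sAbs_eq habs with h' | h'
      · exact absurd h'.symm h1
      · exact h'
  · intro x y z hx
    rw [sAdd] at hx
    split_ifs at hx with h1 h2 h3
    · -- y = z, x = y
      simp only [Set.mem_singleton_iff] at hx
      subst h1; subst hx
      rw [sAdd_sNeg_self]
      exact le_rfl
    · simp only [Set.mem_singleton_iff] at hx
      subst hx
      rw [sAdd_sNeg_self]
      exact h2.le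
    · simp only [Set.mem_singleton_iff] at hx
      subst hx
      rcases eq_or_ne x (sNeg y) with rfl | hne
      · rw [sAdd_self]; rfl
      · rw [sAdd_of_lt (by rwa [sAbs_sNeg])]; rfl
    · -- |y| = |z|, y ≠ z, so z = sNeg y; |x| ≤ |y|
      simp only [Set.mem_setOf_eq] at hx
      push_neg at h2 h3
      have habs : sAbs y = sAbs z := le_antisymm h2 h3
      have hz : z = sNeg y := by
        rcases eq_or_eq_sNeg_of_sAbs_eq habs with h' | h'
        · exact absurd h' (Ne.symm h1)
        · exact h'
      subst hz
      rcases eq_or_ne x (sNeg y) with rfl | hne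
      · rw [sAdd_self]; rfl
      · have hx' : sAbs x ≤ sAbs (sNeg y) := by rwa [sAbs_sNeg]
        rcases lt_or_eq_of_le hx' with h | h
        · rw [sAdd_of_lt' h]; rfl
        · rcases eq_or_eq_sNeg_of_sAbs_eq h.symm with h' | h'
          · exact absurd h' hne
          · have hyx : y = x := by rw [h', sNeg_sNeg]
            subst hyx
            rw [sAdd_sNeg_self]
            exact (sAbs_sNeg y).le
end
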